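/- arXiv:2603.02812 — 4 statements merged into one kernel-verified Lean document; each statement's English description precedes it below -/
import Mathlib

section
/- Let D ⊂ ℝ^d (d ≥ 1) be a nonempty open, convex, bounded set, let Ω̂ be a nonempty open subset of D, let (V^k)_{k∈ℕ} be a sequence of maps V^k : closure(D) → ℝ^d, each Lipschitz with constant 1 and satisfying V^k = 0 on ∂D, and let t_k ∈ [0, 1/2] for each k. Define Φ^0 = id on closure(D) and, recursively, Φ^{k+1} = (id + t_k V^k) ∘ Φ^k. Then for every k ∈ ℕ: Φ^k maps closure(D) bijectively onto closure(D), both Φ^k and its inverse are Lipschitz (i.e. Φ^k is bi-Lipschitz), Φ^k(x) = x for all x ∈ ∂D, and the set Ω^k := Φ^k(Ω̂) is an open subset of D. -/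
/-!
Extend `V` by zero outside `D`. The extension `W` is still `1`-Lipschitz on the whole space: a
segment from a point of `D` to a point outside `D` crosses `frontier D`, where `V` vanishes. Hence
`x ↦ x + t • W x` with `t ≤ 1/2` is the identity plus a contraction, so it is a bi-Lipschitz
homeomorphism of the whole space; it fixes `Dᶜ` pointwise, and a bijection that fixes `Dᶜ`
pointwise maps `D` onto `D`. On `closure D` it agrees with `x ↦ x + t • V x`, so each `Φ k`
agrees on `closure D` with a composite of such homeomorphisms.
-/

open scoped NNReal
open Set

theorem IsPreconnected.inter_frontier_nonempty {X : Type*} [TopologicalSpace X] {s t : Set X}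
    (hs : IsPreconnected s) (hst : (s ∩ t).Nonempty) (hst' : (s \ t).Nonempty) :
    (s ∩ frontier t).Nonempty := by
  by_contra h
  have hcover : s ⊆ interior t ∪ (closure t)ᶜ := fun x hx => by
    by_cases hxt : x ∈ closure t
    · exact .inl (by_contra fun hxi => h ⟨x, hx, hxt, hxi⟩)
    · exact .inr hxt
  have hdisj : Disjoint (interior t) (closure t)ᶜ :=
    disjoint_compl_right.mono_left interior_subset_closure
  obtain ⟨x, hxs, hxt⟩ := hst
  obtain ⟨y, hys, hyt⟩ := hst'
  rcases hs.subset_or_subset isOpen_interior isClosed_closure.isOpen_compl hdisj hcover with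
    hint | hext
  · exact hyt (interior_subset (hint hys))
  · exact hext hxs (subset_closure hxt)

theorem Equiv.image_eq_self_of_forall_notMem {α : Type*} {s : Set α} (e : α ≃ α)
    (he : ∀ x ∉ s, e x = x) : e '' s = s := by
  ext y
  constructor
  · rintro ⟨x, hx, rfl⟩
    by_contra hy
    rw [e.injective (he _ hy)] at hy
    exact hy hx
  · intro hy
    refine ⟨e.symm y, by_contra fun hx => ?_, e.apply_symm_apply y⟩
    have hfix := he _ hx
    rw [e.apply_symm_apply] at hfix
    exact hx (hfix ▸ hy)

section ZeroExtension

variable {E F : Type*} [SeminormedAddCommGroup E] [NormedSpace ℝ E] [SeminormedAddCommGroup F]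
  {s : Set E} {f : E → F} {K : ℝ≥0}

theorem LipschitzOnWith.norm_le_mul_dist_of_mem_of_notMem (hf : LipschitzOnWith K f (closure s))
    (hfr : ∀ x ∈ frontier s, f x = 0) {x z : E} (hx : x ∈ s) (hz : z ∉ s) :
    ‖f x‖ ≤ K * dist x z := by
  obtain ⟨p, hp, hps⟩ := (convex_segment x z).isPreconnected.inter_frontier_nonempty
    ⟨x, left_mem_segment ℝ x z, hx⟩ ⟨z, right_mem_segment ℝ x z, hz⟩
  calc ‖f x‖ = dist (f x) (f p) := by rw [hfr p hps, dist_zero_right]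
    _ ≤ K * dist x p := hf.dist_le_mul x (subset_closure hx) p (frontier_subset_closure hps)
    _ ≤ K * dist x z := by
      gcongr
      linarith [dist_add_dist_of_mem_segment hp, dist_nonneg (x := p) (y := z)]

theorem LipschitzOnWith.lipschitzWith_indicator (hf : LipschitzOnWith K f (closure s))
    (hfr : ∀ x ∈ frontier s, f x = 0) : LipschitzWith K (s.indicator f) := by
  refine LipschitzWith.of_dist_le_mul fun x y => ?_
  by_cases hx : x ∈ s <;> by_cases hy : y ∈ s <;>
    simp only [indicator_of_mem, indicator_of_notMem, hx, hy, not_false_eq_true]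
  · exact hf.dist_le_mul x (subset_closure hx) y (subset_closure hy)
  · simpa only [dist_zero_right] using hf.norm_le_mul_dist_of_mem_of_notMem hfr hx hy
  · simpa only [dist_zero_left, dist_comm x] using hf.norm_le_mul_dist_of_mem_of_notMem hfr hy hx
  · rw [dist_self]
    positivity

end ZeroExtension

theorem LipschitzWith.exists_homeomorph_eq_id_add {E : Type*} [NormedAddCommGroup E]
    [NormedSpace ℝ E] [CompleteSpace E] {f : E → E} {K : ℝ≥0} (hf : LipschitzWith K f)
    (hK : K < 1) : ∃ h : E ≃ₜ E, ⇑h = fun x => x + f x := by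
  have happrox : ApproximatesLinearOn (fun x => x + f x)
      ((ContinuousLinearEquiv.refl ℝ E : E ≃L[ℝ] E) : E →L[ℝ] E) univ K := by
    rw [ApproximatesLinearOn.approximatesLinearOn_iff_lipschitzOnWith]
    convert hf.lipschitzOnWith (s := univ) using 1
    ext x
    simp
  have hc : Subsingleton E ∨ K < ‖((ContinuousLinearEquiv.refl ℝ E).symm : E →L[ℝ] E)‖₊⁻¹ := by
    rcases subsingleton_or_nontrivial E with hE | hE
    · exact .inl hE
    · right
      simpa using hK
  exact ⟨happrox.toHomeomorph _ hc, rfl⟩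

structure IsBiLipschitzSupportedIn {X : Type*} [PseudoEMetricSpace X] (D : Set X) (h : X ≃ₜ X) :
    Prop where
  lipschitz : ∃ K, LipschitzWith K h
  antilipschitz : ∃ K, AntilipschitzWith K h
  apply_of_notMem : ∀ x ∉ D, h x = x

namespace IsBiLipschitzSupportedIn

variable {X : Type*} [PseudoEMetricSpace X] {D : Set X} {g h : X ≃ₜ X}

theorem refl : IsBiLipschitzSupportedIn D (Homeomorph.refl X) :=
  ⟨⟨1, LipschitzWith.id⟩, ⟨1, AntilipschitzWith.id⟩, fun _ _ => rfl⟩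

theorem trans (hg : IsBiLipschitzSupportedIn D g) (hh : IsBiLipschitzSupportedIn D h) :
    IsBiLipschitzSupportedIn D (g.trans h) := by
  obtain ⟨⟨Kg, hKg⟩, ⟨Lg, hLg⟩, hgD⟩ := hg
  obtain ⟨⟨Kh, hKh⟩, ⟨Lh, hLh⟩, hhD⟩ := hh
  refine ⟨⟨Kh * Kg, hKh.comp hKg⟩, ⟨Lg * Lh, hLh.comp hLg⟩, fun x hx => ?_⟩
  rw [Homeomorph.trans_apply, hgD x hx, hhD x hx]

theorem image_eq (hh : IsBiLipschitzSupportedIn D h) : h '' D = D :=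
  h.toEquiv.image_eq_self_of_forall_notMem hh.apply_of_notMem

theorem image_closure (hh : IsBiLipschitzSupportedIn D h) : h '' closure D = closure D := by
  rw [h.image_closure, hh.image_eq]

theorem bijOn_closure (hh : IsBiLipschitzSupportedIn D h) : BijOn h (closure D) (closure D) := by
  have := h.injective.injOn.bijOn_image (s := closure D)
  rwa [hh.image_closure] at this

theorem apply_of_mem_frontier (hh : IsBiLipschitzSupportedIn D h) (hD : IsOpen D) {x : X}
    (hx : x ∈ frontier D) : h x = x :=
  hh.apply_of_notMem x (hD.frontier_eq ▸ hx).2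

end IsBiLipschitzSupportedIn

theorem exists_isBiLipschitzSupportedIn_eqOn_of_recursion {X : Type*} [PseudoEMetricSpace X]
    {D : Set X} {T Φ : ℕ → X → X}
    (hT : ∀ k, ∃ h : X ≃ₜ X, IsBiLipschitzSupportedIn D h ∧ EqOn (T k) h (closure D))
    (hΦ0 : ∀ x ∈ closure D, Φ 0 x = x)
    (hΦsucc : ∀ k, ∀ x ∈ closure D, Φ (k + 1) x = T k (Φ k x)) (k : ℕ) :
    ∃ h : X ≃ₜ X, IsBiLipschitzSupportedIn D h ∧ EqOn (Φ k) h (closure D) := by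
  induction k with
  | zero => exact ⟨Homeomorph.refl X, .refl, hΦ0⟩
  | succ k ih =>
    obtain ⟨g, hg, hΦg⟩ := ih
    obtain ⟨h, hh, hTh⟩ := hT k
    refine ⟨g.trans h, hg.trans hh, fun x hx => ?_⟩
    rw [hΦsucc k x hx, hΦg hx, hTh (hg.bijOn_closure.mapsTo hx), Homeomorph.trans_apply]

theorem exists_isBiLipschitzSupportedIn_eqOn_add_smul {E : Type*} [NormedAddCommGroup E]
    [NormedSpace ℝ E] [CompleteSpace E] {D : Set E} {V : E → E} {K : ℝ≥0} {t : ℝ}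
    (hV : LipschitzOnWith K V (closure D)) (hVfr : ∀ x ∈ frontier D, V x = 0)
    (ht : ‖t‖₊ * K < 1) :
    ∃ h : E ≃ₜ E, IsBiLipschitzSupportedIn D h ∧ EqOn (fun x => x + t • V x) h (closure D) := by
  have htW : LipschitzWith (‖t‖₊ * K) fun x => t • D.indicator V x :=
    (lipschitzWith_smul t).comp (hV.lipschitzWith_indicator hVfr)
  obtain ⟨h, hh⟩ := htW.exists_homeomorph_eq_id_add ht
  refine ⟨h, ⟨⟨_, hh ▸ LipschitzWith.id.add htW⟩,
    ⟨_, hh ▸ AntilipschitzWith.id.add_lipschitzWith htW (by simpa using ht)⟩,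
    fun x hx => ?_⟩, fun x hx => ?_⟩ <;> rw [hh]
  · simp [indicator_of_notMem hx]
  · by_cases hxD : x ∈ D
    · simp [indicator_of_mem hxD]
    · have hxfr : x ∈ frontier D := ⟨hx, fun hxi => hxD (interior_subset hxi)⟩
      simp [indicator_of_notMem hxD, hVfr x hxfr]

theorem stmt0_general (d : ℕ)
    (D Ωhat : Set (EuclideanSpace ℝ (Fin d)))
    (hDopen : IsOpen D)
    (hΩopen : IsOpen Ωhat) (hΩD : Ωhat ⊆ D)
    (V : ℕ → EuclideanSpace ℝ (Fin d) → EuclideanSpace ℝ (Fin d))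
    (hVlip : ∀ k, LipschitzOnWith 1 (V k) (closure D))
    (hVbd : ∀ k, ∀ x ∈ frontier D, V k x = 0)
    (t : ℕ → ℝ) (ht : ∀ k, t k ∈ Set.Icc (0 : ℝ) (1 / 2))
    (Φ : ℕ → EuclideanSpace ℝ (Fin d) → EuclideanSpace ℝ (Fin d))
    (hΦ0 : ∀ x ∈ closure D, Φ 0 x = x)
    (hΦsucc : ∀ k, ∀ x ∈ closure D, Φ (k + 1) x = Φ k x + t k • V k (Φ k x)) :
    ∀ k : ℕ,
      Set.BijOn (Φ k) (closure D) (closure D) ∧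
      (∃ K : ℝ≥0, LipschitzOnWith K (Φ k) (closure D)) ∧
      (∃ K : ℝ≥0, ∀ x ∈ closure D, ∀ y ∈ closure D,
        dist x y ≤ (K : ℝ) * dist (Φ k x) (Φ k y)) ∧
      (∀ x ∈ frontier D, Φ k x = x) ∧
      IsOpen (Φ k '' Ωhat) ∧ Φ k '' Ωhat ⊆ D := by
  have htV : ∀ k, ‖t k‖₊ * 1 < 1 := fun k => by
    rw [mul_one, ← NNReal.coe_lt_coe, NNReal.coe_one, coe_nnnorm, Real.norm_of_nonneg (ht k).1]
    linarith [(ht k).2]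
  intro k
  obtain ⟨h, hh, hΦh⟩ := exists_isBiLipschitzSupportedIn_eqOn_of_recursion
    (fun k => exists_isBiLipschitzSupportedIn_eqOn_add_smul (hVlip k) (hVbd k) (htV k))
    hΦ0 hΦsucc k
  obtain ⟨K, hK⟩ := hh.lipschitz
  obtain ⟨L, hL⟩ := hh.antilipschitz
  have hΩ : Φ k '' Ωhat = h '' Ωhat := (hΦh.mono (hΩD.trans subset_closure)).image_eq
  refine ⟨hh.bijOn_closure.congr hΦh.symm, ⟨K, fun x hx y hy => ?_⟩,
    ⟨L, fun x hx y hy => ?_⟩, fun x hx => ?_, hΩ ▸ h.isOpenMap _ hΩopen, ?_⟩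
  · rw [hΦh hx, hΦh hy]
    exact hK x y
  · rw [hΦh hx, hΦh hy]
    exact hL.le_mul_dist x y
  · rw [hΦh (frontier_subset_closure hx)]
    exact hh.apply_of_mem_frontier hDopen hx
  · rw [hΩ, ← hh.image_eq]
    exact image_mono hΩD

/-- Properties of the mappings `Φ^k` produced by the steepest
descent algorithm (Lemma 2.2 of the paper): each `Φ^k` maps `closure D`
bijectively onto itself, is bi-Lipschitz there, fixes the boundary of `D`,
and `Ω^k := Φ^k(Ω̂)` is an open subset of `D`. -/
theorem stmt0 (d : ℕ) (hd : 1 ≤ d)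
    (D Ωhat : Set (EuclideanSpace ℝ (Fin d)))
    (hDopen : IsOpen D) (hDconv : Convex ℝ D) (hDbdd : Bornology.IsBounded D)
    (hDne : D.Nonempty)
    (hΩopen : IsOpen Ωhat) (hΩne : Ωhat.Nonempty) (hΩD : Ωhat ⊆ D)
    (V : ℕ → EuclideanSpace ℝ (Fin d) → EuclideanSpace ℝ (Fin d))
    (hVlip : ∀ k, LipschitzOnWith 1 (V k) (closure D))
    (hVbd : ∀ k, ∀ x ∈ frontier D, V k x = 0)
    (t : ℕ → ℝ) (ht : ∀ k, t k ∈ Set.Icc (0 : ℝ) (1 / 2))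
    (Φ : ℕ → EuclideanSpace ℝ (Fin d) → EuclideanSpace ℝ (Fin d))
    (hΦ0 : ∀ x ∈ closure D, Φ 0 x = x)
    (hΦsucc : ∀ k, ∀ x ∈ closure D, Φ (k + 1) x = Φ k x + t k • V k (Φ k x)) :
    ∀ k : ℕ,
      Set.BijOn (Φ k) (closure D) (closure D) ∧
      (∃ K : ℝ≥0, LipschitzOnWith K (Φ k) (closure D)) ∧
      (∃ K : ℝ≥0, ∀ x ∈ closure D, ∀ y ∈ closure D,
        dist x y ≤ (K : ℝ) * dist (Φ k x) (Φ k y)) ∧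
      (∀ x ∈ frontier D, Φ k x = x) ∧
      IsOpen (Φ k '' Ωhat) ∧ Φ k '' Ωhat ⊆ D :=
  stmt0_general d D Ωhat hDopen hΩopen hΩD V hVlip hVbd t ht Φ hΦ0 hΦsucc
end

section
/- For every dimension d ≥ 1 there exists a constant c > 0, depending only on d, such that for every real d × d matrix A with operator norm at most 1 and every t ∈ [0, 1/2], the matrix B := I + t·A is invertible and ‖ I − B⁻¹ · B⁻ᵀ · det(B) − t·( A + Aᵀ − trace(A)·I ) ‖ ≤ c·t², where ‖·‖ is the operator norm, I the d × d identity matrix, and B⁻ᵀ the transpose of B⁻¹. -/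
open Matrix

/-- The spectral norm of a real `d × d` matrix: the operator norm of the
induced linear map on the Euclidean space `ℝ^d`. -/
noncomputable def specNorm {d : ℕ} (A : Matrix (Fin d) (Fin d) ℝ) : ℝ :=
  ‖Matrix.toEuclideanCLM (𝕜 := ℝ) A‖

/-!
Write `B = 1 + tA`. The Neumann series gives `B⁻¹ = 1 - tA + O(t²)` and
`B⁻ᵀ = (1 + tAᵀ)⁻¹ = 1 - tAᵀ + O(t²)`. Expanding `det B` multilinearly in the rows,
`det B = ∑ₛ t^|s| det Aₛ`, where `Aₛ` takes the rows in `s` from `A` and the others from `1`; the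
terms with `|s| ≤ 1` sum to `1 + t tr A`, and the others are `O(t²)` since the entries of `A` are
bounded by `‖A‖ ≤ 1`, so that `|det Aₛ| ≤ d!`. Multiplying expansions `1 + t xᵢ + O(t²)` adds the
first-order terms.

The `O(t²)` have to be uniform in `A` and `t`: they are stated along any filter on which `‖A‖ ≤ 1`
and `t ∈ [0, 1/2]` hold eventually, and the theorem uses the principal filter of that set.
-/

open Finset Asymptotics Filter
open scoped Nat

section NormedAlgebra

variable {α R : Type*} [NormedRing R] {l : Filter α}

theorem NormedRing.norm_inverse_one_sub_sub_le [NormOneClass R] [HasSummableGeomSeries R]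
    {x : R} (hx : ‖x‖ ≤ 1 / 2) :
    ‖Ring.inverse (1 - x) - (1 + x)‖ ≤ 2 * ‖x‖ ^ 2 := by
  have hx1 : ‖x‖ < 1 := by linarith
  have hfirst := inverse_one_sub_nth_order' 1 hx1
  have hsecond := inverse_one_sub_nth_order' 2 hx1
  simp only [sum_range_succ, range_zero, sum_empty, zero_add, pow_zero, pow_one] at hfirst hsecond
  set y := Ring.inverse (1 - x)
  have hy : ‖y‖ ≤ 2 := by
    have : ‖y‖ ≤ 1 + ‖x‖ * ‖y‖ :=
      calc ‖y‖ = ‖1 + x * y‖ := by rw [← hfirst]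
        _ ≤ ‖(1 : R)‖ + ‖x * y‖ := norm_add_le _ _
        _ ≤ 1 + ‖x‖ * ‖y‖ := by rw [norm_one]; gcongr; exact norm_mul_le _ _
    nlinarith [norm_nonneg y]
  calc ‖y - (1 + x)‖ = ‖x ^ 2 * y‖ := by rw [sub_eq_iff_eq_add'.2 hsecond]
    _ ≤ ‖x‖ ^ 2 * ‖y‖ := (norm_mul_le _ _).trans (by gcongr; exact norm_pow_le _ _)
    _ ≤ 2 * ‖x‖ ^ 2 := by nlinarith [sq_nonneg ‖x‖]

variable [NormedAlgebra ℝ R] {t : α → ℝ}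

theorem Asymptotics.isBigO_inverse_one_add_smul_sub [NormOneClass R] [HasSummableGeomSeries R]
    {a : α → R} (ha : ∀ᶠ p in l, ‖a p‖ ≤ 1) (ht : ∀ᶠ p in l, t p ∈ Set.Icc 0 (1 / 2)) :
    (fun p => Ring.inverse (1 + t p • a p) - (1 + t p • -a p)) =O[l] fun p => t p ^ 2 := by
  refine .of_bound 2 ?_
  filter_upwards [ha, ht] with p hap ⟨ht0, ht1⟩
  have hsmul : ‖t p • -a p‖ ≤ t p := by
    rw [norm_smul, norm_neg, Real.norm_of_nonneg ht0]
    exact mul_le_of_le_one_right ht0 hap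
  have h := NormedRing.norm_inverse_one_sub_sub_le (hsmul.trans ht1)
  rw [smul_neg, sub_neg_eq_add, ← smul_neg] at h
  rw [Real.norm_of_nonneg (sq_nonneg _)]
  exact h.trans (by gcongr)

theorem Asymptotics.IsBigO.mul_sub_one_add_smul {x y x₁ y₁ : α → R}
    (hx : (fun p => x p - (1 + t p • x₁ p)) =O[l] fun p => t p ^ 2)
    (hy : (fun p => y p - (1 + t p • y₁ p)) =O[l] fun p => t p ^ 2)
    (ht : t =O[l] fun _ => (1 : ℝ)) (hx₁ : x₁ =O[l] fun _ => (1 : ℝ))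
    (hy₁ : y₁ =O[l] fun _ => (1 : ℝ)) :
    (fun p => x p * y p - (1 + t p • (x₁ p + y₁ p))) =O[l] fun p => t p ^ 2 := by
  have hexp : ∀ p, x p * y p - (1 + t p • (x₁ p + y₁ p)) =
      (x p - (1 + t p • x₁ p)) * y p + (1 + t p • x₁ p) * (y p - (1 + t p • y₁ p)) +
        t p ^ 2 • (x₁ p * y₁ p) := by
    intro p
    simp only [mul_add, add_mul, sub_mul, mul_sub, one_mul, mul_one, smul_mul_assoc,
      mul_smul_comm, smul_smul, smul_add]
    module
  have hbdd : ∀ {z : α → R}, z =O[l] (fun _ => (1 : ℝ)) →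
      (fun p => 1 + t p • z p) =O[l] fun _ => (1 : ℝ) := fun hz =>
    (isBigO_const_const _ one_ne_zero l).add ((ht.smul hz).congr_right fun _ => one_smul ℝ 1)
  have ht2 : (fun p => t p ^ 2) =O[l] fun _ => (1 : ℝ) :=
    (ht.pow 2).congr_right fun _ => one_pow 2
  have hy' : y =O[l] fun _ => (1 : ℝ) :=
    ((hy.trans ht2).add (hbdd hy₁)).congr_left fun p => sub_add_cancel _ _
  have hr : (fun p => (x p - (1 + t p • x₁ p)) * y p) =O[l] fun p => t p ^ 2 :=
    (hx.mul hy').congr_right fun _ => mul_one _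
  have hs : (fun p => (1 + t p • x₁ p) * (y p - (1 + t p • y₁ p))) =O[l] fun p => t p ^ 2 :=
    (hbdd hx₁ |>.mul hy).congr_right fun _ => one_mul _
  have hq : (fun p => t p ^ 2 • (x₁ p * y₁ p)) =O[l] fun p => t p ^ 2 :=
    ((isBigO_refl _ l).smul (hx₁.mul hy₁)).congr_right fun _ => by simp
  simpa only [hexp] using (hr.add hs).add hq

end NormedAlgebra

section Determinant

variable {n : Type*} [Fintype n]

theorem Matrix.abs_trace_le_card (A : Matrix n n ℝ) (hA : ∀ i j, |A i j| ≤ 1) :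
    |trace A| ≤ Fintype.card n :=
  calc |trace A| ≤ ∑ i, |A i i| := abs_sum_le_sum_abs _ _
    _ ≤ ∑ _i : n, (1 : ℝ) := sum_le_sum fun i _ => hA i i
    _ = Fintype.card n := by simp

variable [DecidableEq n]

theorem Matrix.det_add_smul_eq_sum {R : Type*} [CommRing R] (M A : Matrix n n R) (t : R) :
    det (M + t • A) = ∑ s : Finset n, t ^ s.card * det (s.piecewise A M) := by
  have h := (detRowAlternating (n := n) (R := R)).toMultilinearMap.map_add_univ
    (t • A : n → n → R) M
  rw [add_comm]
  refine h.trans (sum_congr rfl fun s _ => ?_)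
  have hpiece : s.piecewise (t • A) M =
      s.piecewise (fun i => t • s.piecewise A M i) (s.piecewise A M) := by
    ext1 i
    by_cases hi : i ∈ s <;> simp [Finset.piecewise, hi]; rfl
  rw [hpiece, MultilinearMap.map_piecewise_smul, prod_const, smul_eq_mul]
  rfl

theorem Matrix.det_updateRow_one {R : Type*} [CommRing R] (i : n) (v : n → R) :
    det (updateRow (1 : Matrix n n R) i v) = v i := by
  have hv : ∑ k, v k • (1 : Matrix n n R) k = v := by
    ext j; simp [one_apply]
  simpa [hv] using det_updateRow_sum (1 : Matrix n n R) i v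

theorem Matrix.sum_card_le_one_pow_mul_det_piecewise_one {R : Type*} [CommRing R]
    (A : Matrix n n R) (t : R) :
    ∑ s ∈ univ.filter (fun s : Finset n => s.card ≤ 1),
      t ^ s.card * det (s.piecewise A (1 : Matrix n n R)) = 1 + t * trace A := by
  have hfilter : univ.filter (fun s : Finset n => s.card ≤ 1) =
      insert ∅ (univ.map ⟨singleton, singleton_injective⟩) := by
    ext s
    simp [Nat.le_one_iff_eq_zero_or_eq_one, card_eq_one, eq_comm]
  have hempty : (∅ : Finset n).piecewise A (1 : Matrix n n R) = (1 : Matrix n n R) := by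
    ext1 i; simp [Finset.piecewise]
  have hsingle : ∀ i, ({i} : Finset n).piecewise A (1 : Matrix n n R) = updateRow 1 i (A i) :=
    fun i => piecewise_singleton _ _ _
  rw [hfilter, sum_insert (by simp), sum_map, trace, mul_sum]
  simp [hempty, hsingle, det_updateRow_one]

theorem Matrix.abs_det_piecewise_one_le (A : Matrix n n ℝ) (hA : ∀ i j, |A i j| ≤ 1)
    (s : Finset n) : |det (s.piecewise A (1 : Matrix n n ℝ))| ≤ (Fintype.card n)! := by
  have hone : ∀ i j, |(1 : Matrix n n ℝ) i j| ≤ 1 := fun i j => by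
    rw [one_apply]; split_ifs <;> simp
  have hentry : ∀ i j, |s.piecewise A (1 : Matrix n n ℝ) i j| ≤ 1 := by
    intro i j
    by_cases hi : i ∈ s
    · simpa [Finset.piecewise, hi] using hA i j
    · simpa [Finset.piecewise, hi] using hone i j
  simpa using det_le (abv := AbsoluteValue.abs) hentry

theorem Matrix.abs_det_one_add_smul_sub_le (A : Matrix n n ℝ) (hA : ∀ i j, |A i j| ≤ 1)
    {t : ℝ} (ht0 : 0 ≤ t) (ht1 : t ≤ 1) :
    |det (1 + t • A) - 1 - t * trace A| ≤ 2 ^ Fintype.card n * (Fintype.card n)! * t ^ 2 := by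
  set g : Finset n → ℝ := fun s => t ^ s.card * det (s.piecewise A (1 : Matrix n n ℝ))
  set high := univ.filter (fun s : Finset n => ¬ s.card ≤ 1)
  have hhigh : ∀ s ∈ high, |g s| ≤ (Fintype.card n)! * t ^ 2 := by
    intro s hs
    have hcard : 2 ≤ s.card := by have := (mem_filter.1 hs).2; omega
    rw [abs_mul, abs_pow, abs_of_nonneg ht0, mul_comm]
    exact mul_le_mul (abs_det_piecewise_one_le A hA s) (pow_le_pow_of_le_one ht0 ht1 hcard)
      (by positivity) (by positivity)
  have hsplit : det (1 + t • A) - 1 - t * trace A = ∑ s ∈ high, g s := by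
    rw [det_add_smul_eq_sum, ← sum_filter_add_sum_filter_not _ (fun s => s.card ≤ 1),
      sum_card_le_one_pow_mul_det_piecewise_one]
    ring
  rw [hsplit]
  calc |∑ s ∈ high, g s| ≤ ∑ s ∈ high, |g s| := abs_sum_le_sum_abs _ _
    _ ≤ ∑ _s ∈ high, ((Fintype.card n)! * t ^ 2 : ℝ) := sum_le_sum hhigh
    _ ≤ ∑ _s : Finset n, ((Fintype.card n)! * t ^ 2 : ℝ) :=
        sum_le_sum_of_subset_of_nonneg (filter_subset _ _) fun _ _ _ => by positivity
    _ = 2 ^ Fintype.card n * (Fintype.card n)! * t ^ 2 := by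
        rw [sum_const, card_univ, Fintype.card_finset, nsmul_eq_mul]; push_cast; ring

end Determinant

section L2OpNorm

open scoped Matrix.Norms.L2Operator

variable {n : Type*} [Fintype n] [DecidableEq n]

theorem Matrix.norm_apply_le_l2_opNorm {m 𝕜 : Type*} [Fintype m] [RCLike 𝕜] (A : Matrix m n 𝕜)
    (i : m) (j : n) : ‖A i j‖ ≤ ‖A‖ := by
  have h := A.l2_opNorm_mulVec (WithLp.toLp 2 (Pi.single j 1))
  simp only [mulVec_single, MulOpposite.op_one, one_smul, PiLp.continuousLinearEquiv_symm_apply,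
    PiLp.toLp_single, PiLp.norm_single, norm_one, mul_one] at h
  exact (PiLp.norm_apply_le (WithLp.toLp 2 (A.col j)) i).trans h

theorem Matrix.l2_opNorm_transpose {m : Type*} [Fintype m] [DecidableEq m] (A : Matrix m n ℝ) :
    ‖Aᵀ‖ = ‖A‖ := by
  rw [← conjTranspose_eq_transpose_of_trivial, l2_opNorm_conjTranspose]

variable [Nonempty n] {α : Type*} {l : Filter α} {A : α → Matrix n n ℝ} {t : α → ℝ}

theorem Matrix.isBigO_det_one_add_smul_smul_one_sub (hA : ∀ᶠ p in l, ‖A p‖ ≤ 1)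
    (ht : ∀ᶠ p in l, t p ∈ Set.Icc 0 1) :
    (fun p => det (1 + t p • A p) • (1 : Matrix n n ℝ) - (1 + t p • (trace (A p) • 1)))
      =O[l] fun p => t p ^ 2 := by
  refine .of_bound (2 ^ Fintype.card n * (Fintype.card n)!) ?_
  filter_upwards [hA, ht] with p hAp ⟨ht0, ht1⟩
  have heq : det (1 + t p • A p) • (1 : Matrix n n ℝ) - (1 + t p • (trace (A p) • 1)) =
      (det (1 + t p • A p) - 1 - t p * trace (A p)) • 1 := by module
  rw [heq, norm_smul, norm_one, mul_one, Real.norm_eq_abs, Real.norm_of_nonneg (sq_nonneg _)]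
  exact abs_det_one_add_smul_sub_le (A p)
    (fun i j => (norm_apply_le_l2_opNorm (A p) i j).trans hAp) ht0 ht1

theorem Matrix.isBigO_trace_smul_one (hA : ∀ᶠ p in l, ‖A p‖ ≤ 1) :
    (fun p => trace (A p) • (1 : Matrix n n ℝ)) =O[l] fun _ => (1 : ℝ) := by
  refine .of_bound (Fintype.card n) ?_
  filter_upwards [hA] with p hAp
  rw [norm_smul, norm_one, norm_one, mul_one, mul_one, Real.norm_eq_abs]
  exact abs_trace_le_card (A p) fun i j => (norm_apply_le_l2_opNorm (A p) i j).trans hAp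

theorem Matrix.isBigO_one_sub_det_smul_inv_mul_inv_transpose (hA : ∀ᶠ p in l, ‖A p‖ ≤ 1)
    (ht : ∀ᶠ p in l, t p ∈ Set.Icc 0 (1 / 2)) :
    (fun p => 1 - det (1 + t p • A p) • ((1 + t p • A p)⁻¹ * ((1 + t p • A p)⁻¹)ᵀ)
        - t p • (A p + (A p)ᵀ - trace (A p) • 1)) =O[l] fun p => t p ^ 2 := by
  have hAT : ∀ᶠ p in l, ‖(A p)ᵀ‖ ≤ 1 := hA.mono fun p hp => (l2_opNorm_transpose _).trans_le hp
  have hneg : ∀ {f : α → Matrix n n ℝ}, (∀ᶠ p in l, ‖f p‖ ≤ 1) →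
      (fun p => -f p) =O[l] fun _ => (1 : ℝ) := fun hf =>
    .of_norm_eventuallyLE (hf.mono fun p hp => by simpa using hp)
  have ht1 : t =O[l] fun _ => (1 : ℝ) :=
    .of_norm_eventuallyLE (ht.mono fun p hp => by
      simp only [Real.norm_of_nonneg hp.1]; linarith [hp.2])
  have hinv : (fun p => (1 + t p • A p)⁻¹ - (1 + t p • -A p)) =O[l] fun p => t p ^ 2 :=
    (isBigO_inverse_one_add_smul_sub hA ht).congr_left fun p => by
      rw [nonsing_inv_eq_ringInverse]
  have hinvT : (fun p => ((1 + t p • A p)⁻¹)ᵀ - (1 + t p • -(A p)ᵀ)) =O[l] fun p => t p ^ 2 :=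
    (isBigO_inverse_one_add_smul_sub hAT ht).congr_left fun p => by
      rw [transpose_nonsing_inv, transpose_add, transpose_one, transpose_smul,
        nonsing_inv_eq_ringInverse]
  have hdet := isBigO_det_one_add_smul_smul_one_sub hA
    (ht.mono fun p hp => ⟨hp.1, hp.2.trans (by norm_num)⟩)
  have hgram := hinv.mul_sub_one_add_smul hinvT ht1 (hneg hA) (hneg hAT)
  refine (hdet.mul_sub_one_add_smul hgram ht1 (isBigO_trace_smul_one hA)
    ((hneg hA).add (hneg hAT))).neg_left.congr_left fun p => ?_
  rw [smul_one_mul]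
  module

end L2OpNorm

/-- Expansion of the pulled-back coefficient matrix: for
`‖A‖ ≤ 1` and `t ∈ [0, 1/2]`, the matrix `B = I + t A` is invertible and
`I − B⁻¹ B⁻ᵀ det B = t (A + Aᵀ − trace(A) I) + O(t²)`, with a constant
depending only on `d`. -/
theorem stmt5 (d : ℕ) (hd : 1 ≤ d) :
    ∃ c : ℝ, 0 < c ∧
      ∀ A : Matrix (Fin d) (Fin d) ℝ, specNorm A ≤ 1 →
        ∀ t ∈ Set.Icc (0 : ℝ) (1 / 2),
          IsUnit ((1 : Matrix (Fin d) (Fin d) ℝ) + t • A) ∧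
          specNorm
            ((1 : Matrix (Fin d) (Fin d) ℝ)
              - ((1 : Matrix (Fin d) (Fin d) ℝ) + t • A).det •
                  (((1 : Matrix (Fin d) (Fin d) ℝ) + t • A)⁻¹ *
                    (((1 : Matrix (Fin d) (Fin d) ℝ) + t • A)⁻¹)ᵀ)
              - t • (A + Aᵀ - A.trace • (1 : Matrix (Fin d) (Fin d) ℝ)))
            ≤ c * t ^ 2 := by
  open scoped Matrix.Norms.L2Operator in
  have : Nonempty (Fin d) := ⟨⟨0, hd⟩⟩
  set S := {p : Matrix (Fin d) (Fin d) ℝ × ℝ | ‖p.1‖ ≤ 1 ∧ p.2 ∈ Set.Icc 0 (1 / 2)}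
  obtain ⟨c, hc⟩ := isBigO_principal.1 <| isBigO_one_sub_det_smul_inv_mul_inv_transpose
    (l := 𝓟 S) (A := Prod.fst) (t := Prod.snd) (eventually_principal.2 fun _ hp => hp.1)
    (eventually_principal.2 fun _ hp => hp.2)
  refine ⟨max c 1, by positivity, fun A hA t ht => ⟨?_, ?_⟩⟩
  · have hsmul : ‖-(t • A)‖ < 1 := by
      rw [norm_neg, norm_smul, Real.norm_of_nonneg ht.1]
      exact (mul_le_of_le_one_right ht.1 hA).trans_lt (by linarith [ht.2])
    simpa using isUnit_one_sub_of_norm_lt_one hsmul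
  · calc _ ≤ c * ‖t ^ 2‖ := hc (A, t) ⟨hA, ht⟩
      _ ≤ max c 1 * t ^ 2 := by
        rw [Real.norm_of_nonneg (sq_nonneg t)]
        gcongr
        exact le_max_left c 1
end

section
/- Let D ⊂ ℝ^d be a nonempty bounded open set and let Ω̂ be an open set whose closure is contained in D. Let Φ₁ : closure(D) → closure(D) be a bijection with Φ₁(x) = x for all x ∈ ∂D, and let Φ₂ : closure(D) → closure(D) be continuous with Φ₂(x) = x for all x ∈ ∂D. Set Ω₁ := Φ₁(Ω̂) and Ω₂ := D \ Φ₂(closure(D) \ Ω̂). Then for every x ∈ closure(D), | d_{∁Ω₁}(x) − d_{∁Ω₂}(x) | ≤ sup_{z ∈ closure(D)} |Φ₁(z) − Φ₂(z)|, where for an open set Ω ⊆ D we write d_{∁Ω}(x) := inf{ |x − y| : y ∈ closure(D) \ Ω }. -/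
/-- The distance-to-complement function `d_{∁Ω}(x) = inf{|x − y| : y ∈ closure D \ Ω}`
used in the definition of the Hausdorff complementary metric. -/
noncomputable def distCompl {d : ℕ} (D Ω : Set (EuclideanSpace ℝ (Fin d)))
    (x : EuclideanSpace ℝ (Fin d)) : ℝ :=
  sInf ((fun y => ‖x - y‖) '' (closure D \ Ω))

private lemma aux_inf_le {E : Type*} [NormedAddCommGroup E] (K : Set E) (hK : K.Nonempty)
    (f g : E → E) (x : E) (M : ℝ) (h : ∀ y ∈ K, ‖f y - g y‖ ≤ M) :
    sInf ((fun y => ‖x - y‖) '' (f '' K)) ≤ sInf ((fun y => ‖x - y‖) '' (g '' K)) + M := by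
  have hbdd1 : BddBelow ((fun y => ‖x - y‖) '' (f '' K)) :=
    ⟨0, by rintro a ⟨y, _, rfl⟩; exact norm_nonneg _⟩
  have hne2 : ((fun y => ‖x - y‖) '' (g '' K)).Nonempty :=
    ((hK.image g).image _)
  rw [← sub_le_iff_le_add]
  apply le_csInf hne2
  rintro b ⟨_, ⟨y, hy, rfl⟩, rfl⟩
  rw [sub_le_iff_le_add]
  have h1 : sInf ((fun y => ‖x - y‖) '' (f '' K)) ≤ ‖x - f y‖ :=
    csInf_le hbdd1 ⟨f y, ⟨y, hy, rfl⟩, rfl⟩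
  have h2 : ‖x - f y‖ ≤ ‖x - g y‖ + ‖f y - g y‖ := by
    have : x - f y = (x - g y) + (g y - f y) := by abel
    rw [this]
    refine (norm_add_le _ _).trans ?_
    rw [norm_sub_rev (g y) (f y)]
  exact h1.trans (h2.trans (by linarith [h y hy]))

/-- Estimate (eq:hconv) in the proof of Theorem 3.7:
`|d_{∁Ω₁}(x) − d_{∁Ω₂}(x)| ≤ sup_{z ∈ closure D} |Φ₁(z) − Φ₂(z)|` for
`Ω₁ = Φ₁(Ω̂)`, `Ω₂ = D \ Φ₂(closure D \ Ω̂)`. -/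
theorem stmt7 (d : ℕ) (D Ωhat : Set (EuclideanSpace ℝ (Fin d)))
    (hDopen : IsOpen D) (hDbdd : Bornology.IsBounded D) (hDne : D.Nonempty)
    (hΩopen : IsOpen Ωhat) (hΩD : closure Ωhat ⊆ D)
    (Φ₁ Φ₂ : EuclideanSpace ℝ (Fin d) → EuclideanSpace ℝ (Fin d))
    (hΦ₁bij : Set.BijOn Φ₁ (closure D) (closure D))
    (hΦ₁bd : ∀ x ∈ frontier D, Φ₁ x = x)
    (hΦ₂cont : ContinuousOn Φ₂ (closure D))
    (hΦ₂maps : Set.MapsTo Φ₂ (closure D) (closure D))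
    (hΦ₂bd : ∀ x ∈ frontier D, Φ₂ x = x) :
    ∀ x ∈ closure D,
      |distCompl D (Φ₁ '' Ωhat) x - distCompl D (D \ Φ₂ '' (closure D \ Ωhat)) x| ≤
        sSup ((fun z => ‖Φ₁ z - Φ₂ z‖) '' closure D) := by
  intro x hx
  set K : Set (EuclideanSpace ℝ (Fin d)) := closure D \ Ωhat with hKdef
  have hΩsub : Ωhat ⊆ closure D := (subset_closure.trans hΩD).trans subset_closure
  -- boundedness of values
  obtain ⟨R, hR⟩ := (hDbdd.closure).subset_closedBall 0
  have hBddAbove : BddAbove ((fun z => ‖Φ₁ z - Φ₂ z‖) '' closure D) := by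
    refine ⟨2 * R, ?_⟩
    rintro a ⟨z, hz, rfl⟩
    have h1 : ‖Φ₁ z‖ ≤ R := by
      have := hR (hΦ₁bij.mapsTo hz); simpa [Metric.mem_closedBall, dist_eq_norm] using this
    have h2 : ‖Φ₂ z‖ ≤ R := by
      have := hR (hΦ₂maps hz); simpa [Metric.mem_closedBall, dist_eq_norm] using this
    calc ‖Φ₁ z - Φ₂ z‖ ≤ ‖Φ₁ z‖ + ‖Φ₂ z‖ := norm_sub_le _ _
      _ ≤ 2 * R := by linarith
  set M : ℝ := sSup ((fun z => ‖Φ₁ z - Φ₂ z‖) '' closure D) with hMdef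
  have hMnn : 0 ≤ M := by
    obtain ⟨z₀, hz₀⟩ := hDne
    have hz₀' : z₀ ∈ closure D := subset_closure hz₀
    exact (norm_nonneg _).trans (le_csSup hBddAbove ⟨z₀, hz₀', rfl⟩)
  have hMbd : ∀ z ∈ closure D, ‖Φ₁ z - Φ₂ z‖ ≤ M := fun z hz =>
    le_csSup hBddAbove ⟨z, hz, rfl⟩
  -- set identities
  have hset1 : closure D \ Φ₁ '' Ωhat = Φ₁ '' K := by
    have := hΦ₁bij.injOn.image_diff (t := Ωhat)
    rw [hΦ₁bij.image_eq, Set.inter_eq_self_of_subset_right hΩsub] at this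
    exact this.symm
  have hset2 : closure D \ (D \ Φ₂ '' K) = Φ₂ '' K := by
    apply Set.Subset.antisymm
    · rintro z ⟨hz, hz2⟩
      by_cases hzim : z ∈ Φ₂ '' K
      · exact hzim
      · have hzD : z ∉ D := fun hD => hz2 ⟨hD, hzim⟩
        have hzfr : z ∈ frontier D := by
          rw [hDopen.frontier_eq]; exact ⟨hz, hzD⟩
        have hzK : z ∈ K := ⟨hz, fun hΩ => hzD (hΩD (subset_closure hΩ))⟩
        exact ⟨z, hzK, hΦ₂bd z hzfr⟩
    · rintro _ ⟨y, hy, rfl⟩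
      exact ⟨hΦ₂maps hy.1, fun h => h.2 ⟨y, hy, rfl⟩⟩
  unfold distCompl
  rw [hset1, hset2]
  rcases K.eq_empty_or_nonempty with hKe | hKne
  · simp only [hKe, Set.image_empty, Real.sInf_empty, sub_self, abs_zero]
    exact hMnn
  · rw [abs_sub_le_iff]
    constructor
    · linarith [aux_inf_le K hKne Φ₁ Φ₂ x M (fun y hy => hMbd y hy.1)]
    · linarith [aux_inf_le K hKne Φ₂ Φ₁ x M (fun y hy => by
        rw [norm_sub_rev]; exact hMbd y hy.1)]
end

section
/- Let D ⊂ ℝ² be a nonempty open, convex, bounded set, let Ω̂ be an open set whose closure is contained in D, let M > 0, and let (Φ^k)_{k∈ℕ} be a sequence of bijections Φ^k : closure(D) → closure(D), each Lipschitz with constant M and satisfying Φ^k(x) = x for all x ∈ ∂D. Set Ω^k := Φ^k(Ω̂). Then there exist a subsequence (Φ^{k_j})_{j∈ℕ}, a continuous map Φ : closure(D) → closure(D) with Φ(x) = x for all x ∈ ∂D, and an open set Ω ⊆ D, namely Ω = D \ Φ(closure(D) \ Ω̂), such that Φ^{k_j} → Φ uniformly on closure(D) and ρ_H^c(Ω^{k_j},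 Ω) → 0 as j → ∞. -/
/-- The Hausdorff complementary distance
`ρ_H^c(Ω₁, Ω₂) = max_{x ∈ closure D} |d_{∁Ω₁}(x) − d_{∁Ω₂}(x)|`. -/
noncomputable def hcDist {d : ℕ} (D Ω₁ Ω₂ : Set (EuclideanSpace ℝ (Fin d))) : ℝ :=
  sSup ((fun x => |distCompl D Ω₁ x - distCompl D Ω₂ x|) '' closure D)

/-!
By Arzelà–Ascoli, the uniformly Lipschitz maps `Φ^k` of the compact set `closure D` have a
uniformly convergent subsequence; its limit `Φ` is continuous, maps `closure D` into itself and
fixes `∂D`. As `Φ^k` is a bijection of `closure D`, the complement `closure D \ Ω^k` is the image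
`Φ^k(closure D \ Ω̂)`, and since `∂D ⊆ closure D \ Ω̂` is fixed by `Φ`, also
`closure D \ Ω = Φ(closure D \ Ω̂)`. Distance functions to two images of one set differ by at most
the uniform distance of the maps, so `ρ_H^c(Ω^k, Ω) ≤ ‖Φ^k - Φ‖_{C⁰} → 0`. Finally `Ω` is open
because `Φ(closure D \ Ω̂)` is compact.
-/

open Set Filter Topology Metric

lemma distCompl_eq_infDist {d : ℕ} (D Ω : Set (EuclideanSpace ℝ (Fin d)))
    (x : EuclideanSpace ℝ (Fin d)) :
    distCompl D Ω x = infDist x (closure D \ Ω) := by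
  rw [distCompl, infDist_eq_iInf, sInf_image']
  simp [dist_eq_norm]

lemma hcDist_nonneg {d : ℕ} (D Ω₁ Ω₂ : Set (EuclideanSpace ℝ (Fin d))) :
    0 ≤ hcDist D Ω₁ Ω₂ :=
  Real.sSup_nonneg (by rintro _ ⟨x, -, rfl⟩; exact abs_nonneg _)

lemma hcDist_le {d : ℕ} {D Ω₁ Ω₂ : Set (EuclideanSpace ℝ (Fin d))} {ε : ℝ} (hε : 0 ≤ ε)
    (h : ∀ x ∈ closure D, |distCompl D Ω₁ x - distCompl D Ω₂ x| ≤ ε) :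
    hcDist D Ω₁ Ω₂ ≤ ε :=
  Real.sSup_le (by rintro _ ⟨x, hx, rfl⟩; exact h x hx) hε

section infDist

variable {α β : Type*} [PseudoMetricSpace β] {K : Set α} {f g : α → β} {ε : ℝ}

lemma Metric.infDist_image_le_infDist_image_add (hε : 0 ≤ ε)
    (h : ∀ y ∈ K, dist (f y) (g y) ≤ ε) (x : β) :
    infDist x (f '' K) ≤ infDist x (g '' K) + ε := by
  rcases K.eq_empty_or_nonempty with rfl | hK
  · simpa using hε
  refine le_of_forall_pos_le_add fun δ hδ => ?_
  obtain ⟨_, ⟨y, hy, rfl⟩, hyx⟩ :=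
    (infDist_lt_iff (hK.image g)).1 (lt_add_of_pos_right (infDist x (g '' K)) hδ)
  calc infDist x (f '' K) ≤ dist x (f y) := infDist_le_dist_of_mem (mem_image_of_mem f hy)
    _ ≤ dist x (g y) + dist (f y) (g y) := dist_triangle_right _ _ _
    _ ≤ infDist x (g '' K) + ε + δ := by linarith [h y hy]

lemma Metric.abs_infDist_image_sub_infDist_image_le (hε : 0 ≤ ε)
    (h : ∀ y ∈ K, dist (f y) (g y) ≤ ε) (x : β) :
    |infDist x (f '' K) - infDist x (g '' K)| ≤ ε := by
  have h' : ∀ y ∈ K, dist (g y) (f y) ≤ ε := fun y hy => dist_comm (f y) (g y) ▸ h y hy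
  rw [abs_sub_le_iff]
  constructor
  · linarith [infDist_image_le_infDist_image_add hε h x]
  · linarith [infDist_image_le_infDist_image_add hε h' x]

end infDist

section hcDist

variable {d : ℕ} {D K : Set (EuclideanSpace ℝ (Fin d))}

lemma hcDist_le_of_dist_le {Ω₁ Ω₂ : Set (EuclideanSpace ℝ (Fin d))}
    {f g : EuclideanSpace ℝ (Fin d) → EuclideanSpace ℝ (Fin d)} {ε : ℝ} (hε : 0 ≤ ε)
    (h₁ : closure D \ Ω₁ = f '' K) (h₂ : closure D \ Ω₂ = g '' K)
    (h : ∀ y ∈ K, dist (f y) (g y) ≤ ε) :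
    hcDist D Ω₁ Ω₂ ≤ ε :=
  hcDist_le hε fun x _ => by
    rw [distCompl_eq_infDist, distCompl_eq_infDist, h₁, h₂]
    exact abs_infDist_image_sub_infDist_image_le hε h x

theorem tendsto_hcDist_of_tendstoUniformlyOn {ι : Type*} {l : Filter ι}
    {Ωs : ι → Set (EuclideanSpace ℝ (Fin d))} {Ω : Set (EuclideanSpace ℝ (Fin d))}
    {fs : ι → EuclideanSpace ℝ (Fin d) → EuclideanSpace ℝ (Fin d)}
    {Φ : EuclideanSpace ℝ (Fin d) → EuclideanSpace ℝ (Fin d)}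
    (hΦ : TendstoUniformlyOn fs Φ l K) (hΩs : ∀ i, closure D \ Ωs i = fs i '' K)
    (hΩ : closure D \ Ω = Φ '' K) :
    Tendsto (fun i => hcDist D (Ωs i) Ω) l (𝓝 0) := by
  refine tendsto_order.2 ⟨fun a ha => .of_forall fun i => ha.trans_le (hcDist_nonneg _ _ _),
    fun b hb => ?_⟩
  filter_upwards [tendstoUniformlyOn_iff.1 hΦ (b / 2) (half_pos hb)] with i hi
  refine (hcDist_le_of_dist_le (half_pos hb).le (hΩs i) hΩ fun y hy => ?_).trans_lt
    (half_lt_self hb)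
  rw [dist_comm]
  exact (hi y hy).le

end hcDist

theorem exists_subseq_tendstoUniformlyOn_of_lipschitzOnWith {α β : Type*}
    [PseudoMetricSpace α] [MetricSpace β] {K : Set α} {S : Set β}
    (hK : IsCompact K) (hS : IsCompact S) {L : NNReal} (fs : ℕ → α → β)
    (hmaps : ∀ k, MapsTo (fs k) K S) (hlip : ∀ k, LipschitzOnWith L (fs k) K) :
    ∃ ψ : ℕ → ℕ, StrictMono ψ ∧ ∃ Φ : α → β,
      ContinuousOn Φ K ∧ TendstoUniformlyOn (fun j => fs (ψ j)) Φ atTop K := by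
  have : CompactSpace K := isCompact_iff_compactSpace.1 hK
  have hlip' k : LipschitzWith L (K.domRestrict (fs k)) := (hlip k).to_restrict
  let F : ℕ → BoundedContinuousFunction K β := fun k =>
    .mkOfCompact ⟨K.domRestrict (fs k), (hlip' k).continuous⟩
  have hequi : Equicontinuous fun f : range F => ⇑(f : BoundedContinuousFunction K β) :=
    (LipschitzWith.uniformEquicontinuous _ L (by rintro ⟨_, k, rfl⟩; exact hlip' k)).equicontinuous
  have hcpt : IsCompact (closure (range F)) :=
    BoundedContinuousFunction.arzela_ascoli S hS _
      (by rintro _ x ⟨k, rfl⟩; exact hmaps k x.2) hequi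
  obtain ⟨g, -, ψ, hψ, hg⟩ := hcpt.tendsto_subseq fun k => subset_closure (mem_range_self k)
  have hrestrict : Function.extend Subtype.val g (fs 0) ∘ ((↑) : K → α) = g :=
    funext (Subtype.val_injective.extend_apply g (fs 0))
  refine ⟨ψ, hψ, Function.extend Subtype.val g (fs 0), ?_, ?_⟩
  · rw [continuousOn_iff_continuous_domRestrict, domRestrict_eq, hrestrict]
    exact g.continuous
  · rw [tendstoUniformlyOn_iff_tendstoUniformly_comp_coe, hrestrict]
    exact BoundedContinuousFunction.tendsto_iff_tendstoUniformly.1 hg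

lemma closure_sdiff_sdiff_image {X : Type*} [TopologicalSpace X] {D K : Set X} {Φ : X → X}
    (hD : IsOpen D) (hK : frontier D ⊆ K) (hΦ : MapsTo Φ K (closure D))
    (hfix : ∀ x ∈ frontier D, Φ x = x) :
    closure D \ (D \ Φ '' K) = Φ '' K := by
  ext x
  constructor
  · rintro ⟨hxD', hx⟩
    by_cases hxD : x ∈ D
    · by_contra hxK
      exact hx ⟨hxD, hxK⟩
    · have hxfr : x ∈ frontier D := by rw [hD.frontier_eq]; exact ⟨hxD', hxD⟩
      exact ⟨x, hK hxfr, hfix x hxfr⟩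
  · rintro ⟨y, hy, rfl⟩
    exact ⟨hΦ hy, fun h => h.2 (mem_image_of_mem Φ hy)⟩

theorem stmt11_general (D Ωhat : Set (EuclideanSpace ℝ (Fin 2)))
    (hDopen : IsOpen D) (hDbdd : Bornology.IsBounded D)
    (hΩopen : IsOpen Ωhat) (hΩD : closure Ωhat ⊆ D)
    (M : ℝ)
    (Φs : ℕ → EuclideanSpace ℝ (Fin 2) → EuclideanSpace ℝ (Fin 2))
    (hbij : ∀ k, Set.BijOn (Φs k) (closure D) (closure D))
    (hlip : ∀ k, LipschitzOnWith (Real.toNNReal M) (Φs k) (closure D))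
    (hbd : ∀ k, ∀ x ∈ frontier D, Φs k x = x) :
    ∃ ψ : ℕ → ℕ, StrictMono ψ ∧
      ∃ Φ : EuclideanSpace ℝ (Fin 2) → EuclideanSpace ℝ (Fin 2),
        ContinuousOn Φ (closure D) ∧
        Set.MapsTo Φ (closure D) (closure D) ∧
        (∀ x ∈ frontier D, Φ x = x) ∧
        TendstoUniformlyOn (fun j => Φs (ψ j)) Φ Filter.atTop (closure D) ∧
        IsOpen (D \ Φ '' (closure D \ Ωhat)) ∧
        (D \ Φ '' (closure D \ Ωhat)) ⊆ D ∧
        Filter.Tendsto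
          (fun j => hcDist D (Φs (ψ j) '' Ωhat) (D \ Φ '' (closure D \ Ωhat)))
          Filter.atTop (nhds 0) := by
  have hK : IsCompact (closure D) := hDbdd.isCompact_closure
  obtain ⟨ψ, hψ, Φ, hΦc, hΦ⟩ := exists_subseq_tendstoUniformlyOn_of_lipschitzOnWith hK hK Φs
    (fun k => (hbij k).mapsTo) hlip
  have hΦmaps : MapsTo Φ (closure D) (closure D) := fun x hx =>
    isClosed_closure.mem_of_tendsto (hΦ.tendsto_at hx) (.of_forall fun j => (hbij (ψ j)).mapsTo hx)
  have hΦfix : ∀ x ∈ frontier D, Φ x = x := fun x hx =>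
    tendsto_nhds_unique (hΦ.tendsto_at (frontier_subset_closure hx)) (by simp [hbd _ x hx])
  have hfrontier : frontier D ⊆ closure D \ Ωhat :=
    subset_sdiff.2 ⟨frontier_subset_closure, (disjoint_interior_frontier.symm).mono_right
      (hDopen.interior_eq.symm ▸ subset_closure.trans hΩD)⟩
  have hΩs k : closure D \ Φs (ψ k) '' Ωhat = Φs (ψ k) '' (closure D \ Ωhat) := by
    rw [(hbij (ψ k)).injOn.image_sdiff_subset (subset_closure.trans (hΩD.trans subset_closure)),
      (hbij (ψ k)).image_eq]
  refine ⟨ψ, hψ, Φ, hΦc, hΦmaps, hΦfix, hΦ, ?_, sdiff_subset, ?_⟩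
  · exact hDopen.sdiff ((hK.diff hΩopen).image_of_continuousOn (hΦc.mono sdiff_subset)).isClosed
  · exact tendsto_hcDist_of_tendstoUniformlyOn (hΦ.mono sdiff_subset) hΩs
      (closure_sdiff_sdiff_image hDopen hfrontier (hΦmaps.mono_left sdiff_subset) hΦfix)

/-- Compactness part of Theorem 3.7 of the paper: if the
bijections `Φ^k : closure D → closure D` (in `ℝ²`) are uniformly `M`-Lipschitz
and fix `∂D`, then a subsequence `Φ^{k_j}` converges uniformly on `closure D`
to some continuous `Φ` fixing `∂D`, and the shapes `Ω^{k_j} = Φ^{k_j}(Ω̂)`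
converge in the Hausdorff complementary metric to the open set
`Ω = D \ Φ(closure D \ Ω̂) ⊆ D`. -/
theorem stmt11 (D Ωhat : Set (EuclideanSpace ℝ (Fin 2)))
    (hDopen : IsOpen D) (hDconv : Convex ℝ D) (hDbdd : Bornology.IsBounded D)
    (hDne : D.Nonempty)
    (hΩopen : IsOpen Ωhat) (hΩD : closure Ωhat ⊆ D)
    (M : ℝ) (hM : 0 < M)
    (Φs : ℕ → EuclideanSpace ℝ (Fin 2) → EuclideanSpace ℝ (Fin 2))
    (hbij : ∀ k, Set.BijOn (Φs k) (closure D) (closure D))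
    (hlip : ∀ k, LipschitzOnWith (Real.toNNReal M) (Φs k) (closure D))
    (hbd : ∀ k, ∀ x ∈ frontier D, Φs k x = x) :
    ∃ ψ : ℕ → ℕ, StrictMono ψ ∧
      ∃ Φ : EuclideanSpace ℝ (Fin 2) → EuclideanSpace ℝ (Fin 2),
        ContinuousOn Φ (closure D) ∧
        Set.MapsTo Φ (closure D) (closure D) ∧
        (∀ x ∈ frontier D, Φ x = x) ∧
        TendstoUniformlyOn (fun j => Φs (ψ j)) Φ Filter.atTop (closure D) ∧
        IsOpen (D \ Φ '' (closure D \ Ωhat)) ∧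
        (D \ Φ '' (closure D \ Ωhat)) ⊆ D ∧
        Filter.Tendsto
          (fun j => hcDist D (Φs (ψ j) '' Ωhat) (D \ Φ '' (closure D \ Ωhat)))
          Filter.atTop (nhds 0) :=
  stmt11_general D Ωhat hDopen hDbdd hΩopen hΩD M Φs hbij hlip hbd
end
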